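/- arXiv:math/0211339 — 8 statements merged into one kernel-verified Lean document; each statement's English description precedes it below -/
import Mathlib

section
/- Let M be a smooth manifold, g a metric on M, and ∇ a connection on TM that is torsion-free and compatible with g, with curvature R. For vector fields X, Y and a section (ξ, f) of F = TM ⊕ (M×ℝ), define R^s(X,Y)(ξ,f) = ∇̃^s_X ∇̃^s_Y (ξ,f) − ∇̃^s_Y ∇̃^s_X (ξ,f) − ∇̃^s_{[X,Y]}(ξ,f). Then R^s(X,Y)(ξ,f) = ( R(X,Y)ξ − (g(Y,ξ)X − g(X,ξ)Y), 0 ). -/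
/-!
Statement 0 (Shchepetilov, "The geometric sense of R. Sasaki connection").

We model the smooth functions `C^∞(M)` as a commutative ring `C`, the vector
fields on `M` as a module `V` over `C` equipped with a Lie bracket
`bracket : V → V → V` and an action `D : V → C → C` of vector fields on
functions by derivations (with the bracket acting as the commutator of
derivations).  A metric `g` is a symmetric `C`-bilinear form with values in
`C`, and `nabla` is a torsion-free connection compatible with `g`.

A section of `F = TM ⊕ (M × ℝ)` is a pair `(ξ, f) : V × C`, and
`∇̃ˢ_X (ξ, f) = (∇_X ξ + f • X, X f − g(X, ξ))`.

The claim: the curvature `Rˢ` of `∇̃ˢ` satisfies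
`Rˢ(X,Y)(ξ,f) = (R(X,Y)ξ − (g(Y,ξ) • X − g(X,ξ) • Y), 0)`.
-/
theorem sasaki_curvature_sphere
    (C : Type*) [CommRing C]
    (V : Type*) [AddCommGroup V] [Module C V]
    (bracket : V → V → V)
    (D : V → C → C)
    (g : V → V → C)
    (nabla : V → V → V)
    -- vector fields act on functions as derivations,
    -- the bracket acting as the commutator
    (hD_add : ∀ X a b, D X (a + b) = D X a + D X b)
    (hD_mul : ∀ X a b, D X (a * b) = D X a * b + a * D X b)
    (hD_addX : ∀ X Y a, D (X + Y) a = D X a + D Y a)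
    (hD_smulX : ∀ (u : C) X a, D (u • X) a = u * D X a)
    (hD_bracket : ∀ X Y a, D (bracket X Y) a = D X (D Y a) - D Y (D X a))
    -- `g` is a symmetric `C`-bilinear form
    (hg_symm : ∀ X Y, g X Y = g Y X)
    (hg_add_left : ∀ X Y Z, g (X + Y) Z = g X Z + g Y Z)
    (hg_smul_left : ∀ (u : C) X Y, g (u • X) Y = u * g X Y)
    -- `nabla` is a connection: `C`-linear in the lower argument,
    -- additive and Leibniz in the upper argument
    (hn_addX : ∀ X Y ξ, nabla (X + Y) ξ = nabla X ξ + nabla Y ξ)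
    (hn_smulX : ∀ (u : C) X ξ, nabla (u • X) ξ = u • nabla X ξ)
    (hn_add : ∀ X ξ η, nabla X (ξ + η) = nabla X ξ + nabla X η)
    (hn_leibniz : ∀ X (u : C) ξ, nabla X (u • ξ) = D X u • ξ + u • nabla X ξ)
    -- `nabla` is torsion-free
    (h_torsion : ∀ X Y, nabla X Y - nabla Y X = bracket X Y)
    -- `nabla` is compatible with `g`
    (h_compat : ∀ X ξ η, D X (g ξ η) = g (nabla X ξ) η + g ξ (nabla X η))
    (X Y ξ : V) (f : C) :
    -- the connection ∇̃ˢ on F = TM ⊕ (M×ℝ)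
    let nTs : V → V × C → V × C :=
      fun Z p => (nabla Z p.1 + p.2 • Z, D Z p.2 - g Z p.1)
    -- its curvature equals (R(X,Y)ξ − (g(Y,ξ)X − g(X,ξ)Y), 0)
    nTs X (nTs Y (ξ, f)) - nTs Y (nTs X (ξ, f)) - nTs (bracket X Y) (ξ, f)
      = ((nabla X (nabla Y ξ) - nabla Y (nabla X ξ) - nabla (bracket X Y) ξ)
          - (g Y ξ • X - g X ξ • Y), (0 : C)) := by
  intro nTs
  have hD0 : ∀ Z : V, D Z (0:C) = 0 := by
    intro Z
    have h := hD_add Z 0 0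
    simpa using h.symm
  have hD_neg : ∀ (Z : V) (a : C), D Z (-a) = -D Z a := by
    intro Z a
    have h := hD_add Z a (-a)
    rw [add_neg_cancel, hD0] at h
    linear_combination -h
  have hD_sub : ∀ (Z : V) (a b : C), D Z (a - b) = D Z a - D Z b := by
    intro Z a b
    rw [sub_eq_add_neg, hD_add, hD_neg, sub_eq_add_neg]
  have hg_sub_left : ∀ A B Z : V, g (A - B) Z = g A Z - g B Z := by
    intro A B Z
    rw [sub_eq_add_neg, hg_add_left, ← neg_one_smul C B, hg_smul_left]
    ring
  have hg_smul_right : ∀ (u : C) (A B : V), g A (u • B) = u * g A B := by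
    intro u A B
    rw [hg_symm, hg_smul_left, hg_symm]
  have hg_add_right : ∀ A B Z : V, g Z (A + B) = g Z A + g Z B := by
    intro A B Z
    rw [hg_symm, hg_add_left, hg_symm A Z, hg_symm B Z]
  have hb : bracket X Y = nabla X Y - nabla Y X := (h_torsion X Y).symm
  have hgb : g (bracket X Y) ξ = g (nabla X Y) ξ - g (nabla Y X) ξ := by
    rw [hb, hg_sub_left]
  have key2 : D X (D Y f - g Y ξ) - g X (nabla Y ξ + f • Y)
      - (D Y (D X f - g X ξ) - g Y (nabla X ξ + f • X))
      - (D (bracket X Y) f - g (bracket X Y) ξ) = 0 := by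
    rw [hD_sub, hD_sub, hg_add_right, hg_add_right, hg_smul_right, hg_smul_right,
      h_compat X Y ξ, h_compat Y X ξ, hD_bracket, hgb, hg_symm Y X]
    ring
  have key1 : nabla X (nabla Y ξ + f • Y) + (D Y f - g Y ξ) • X
      - (nabla Y (nabla X ξ + f • X) + (D X f - g X ξ) • Y)
      - (nabla (bracket X Y) ξ + f • bracket X Y)
      = (nabla X (nabla Y ξ) - nabla Y (nabla X ξ) - nabla (bracket X Y) ξ)
          - (g Y ξ • X - g X ξ • Y) := by
    rw [hn_add, hn_add, hn_leibniz, hn_leibniz, hb, smul_sub, sub_smul, sub_smul]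
    abel
  have : nTs X (nTs Y (ξ, f)) - nTs Y (nTs X (ξ, f)) - nTs (bracket X Y) (ξ, f)
      = (nabla X (nabla Y ξ + f • Y) + (D Y f - g Y ξ) • X
          - (nabla Y (nabla X ξ + f • X) + (D X f - g X ξ) • Y)
          - (nabla (bracket X Y) ξ + f • bracket X Y),
         D X (D Y f - g Y ξ) - g X (nabla Y ξ + f • Y)
          - (D Y (D X f - g X ξ) - g Y (nabla X ξ + f • X))
          - (D (bracket X Y) f - g (bracket X Y) ξ)) := rfl
  rw [this, key1, key2]
end

section
/- Let M be a smooth manifold, g a metric on M, and ∇ a connection on TM that is torsion-free and compatible with g, with curvature R. For vector fields X, Y and a section (ξ, f) of F = TM ⊕ (M×ℝ), define R^h(X,Y)(ξ,f) = ∇̃^h_X ∇̃^h_Y (ξ,f) − ∇̃^h_Y ∇̃^h_X (ξ,f) − ∇̃^h_{[X,Y]}(ξ,f). Then R^h(X,Y)(ξ,f) = ( R(X,Y)ξ + (g(Y,ξ)X − g(X,ξ)Y), 0 ). -/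
/-!
Statement 0 (Shchepetilov, "The geometric sense of R. Sasaki connection").

We model the smooth functions `C^∞(M)` as a commutative ring `C`, the vector
fields on `M` as a module `V` over `C` equipped with a Lie bracket
`bracket : V → V → V` and an action `D : V → C → C` of vector fields on
functions by derivations (with the bracket acting as the commutator of
derivations).  A metric `g` is a symmetric `C`-bilinear form with values in
`C`, and `nabla` is a torsion-free connection compatible with `g`.

A section of `F = TM ⊕ (M × ℝ)` is a pair `(ξ, f) : V × C`, and
`∇̃ʰ_X (ξ, f) = (∇_X ξ + f • X, X f + g(X, ξ))`.

The claim: the curvature `Rʰ` of `∇̃ʰ` satisfies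
`Rʰ(X,Y)(ξ,f) = (R(X,Y)ξ + (g(Y,ξ) • X − g(X,ξ) • Y), 0)`.
-/
theorem sasaki_curvature_hyperbolic
    (C : Type*) [CommRing C]
    (V : Type*) [AddCommGroup V] [Module C V]
    (bracket : V → V → V)
    (D : V → C → C)
    (g : V → V → C)
    (nabla : V → V → V)
    -- vector fields act on functions as derivations,
    -- the bracket acting as the commutator
    (hD_add : ∀ X a b, D X (a + b) = D X a + D X b)
    (hD_mul : ∀ X a b, D X (a * b) = D X a * b + a * D X b)
    (hD_addX : ∀ X Y a, D (X + Y) a = D X a + D Y a)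
    (hD_smulX : ∀ (u : C) X a, D (u • X) a = u * D X a)
    (hD_bracket : ∀ X Y a, D (bracket X Y) a = D X (D Y a) - D Y (D X a))
    -- `g` is a symmetric `C`-bilinear form
    (hg_symm : ∀ X Y, g X Y = g Y X)
    (hg_add_left : ∀ X Y Z, g (X + Y) Z = g X Z + g Y Z)
    (hg_smul_left : ∀ (u : C) X Y, g (u • X) Y = u * g X Y)
    -- `nabla` is a connection: `C`-linear in the lower argument,
    -- additive and Leibniz in the upper argument
    (hn_addX : ∀ X Y ξ, nabla (X + Y) ξ = nabla X ξ + nabla Y ξ)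
    (hn_smulX : ∀ (u : C) X ξ, nabla (u • X) ξ = u • nabla X ξ)
    (hn_add : ∀ X ξ η, nabla X (ξ + η) = nabla X ξ + nabla X η)
    (hn_leibniz : ∀ X (u : C) ξ, nabla X (u • ξ) = D X u • ξ + u • nabla X ξ)
    -- `nabla` is torsion-free
    (h_torsion : ∀ X Y, nabla X Y - nabla Y X = bracket X Y)
    -- `nabla` is compatible with `g`
    (h_compat : ∀ X ξ η, D X (g ξ η) = g (nabla X ξ) η + g ξ (nabla X η))
    (X Y ξ : V) (f : C) :
    -- the connection ∇̃ʰ on F = TM ⊕ (M×ℝ)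
    let nTh : V → V × C → V × C :=
      fun Z p => (nabla Z p.1 + p.2 • Z, D Z p.2 + g Z p.1)
    -- its curvature equals (R(X,Y)ξ + (g(Y,ξ)X − g(X,ξ)Y), 0)
    nTh X (nTh Y (ξ, f)) - nTh Y (nTh X (ξ, f)) - nTh (bracket X Y) (ξ, f)
      = ((nabla X (nabla Y ξ) - nabla Y (nabla X ξ) - nabla (bracket X Y) ξ)
          + (g Y ξ • X - g X ξ • Y), (0 : C)) := by

  intro nTh
  have hg_sub_left : ∀ A B Z, g (A - B) Z = g A Z - g B Z := by
    intro A B Z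
    rw [sub_eq_add_neg, hg_add_left, ← neg_one_smul C B, hg_smul_left]
    ring
  have hg_smul_right : ∀ (u : C) A B, g A (u • B) = u * g A B := by
    intro u A B; rw [hg_symm, hg_smul_left, hg_symm]
  have hg_add_right : ∀ A B Z, g A (B + Z) = g A B + g A Z := by
    intro A B Z; rw [hg_symm, hg_add_left, hg_symm B, hg_symm Z]
  have hbr : bracket X Y = nabla X Y - nabla Y X := (h_torsion X Y).symm
  simp only [nTh]
  refine Prod.ext ?_ ?_
  · simp only [Prod.fst_sub, hn_add, hn_leibniz, hbr, smul_sub, add_smul]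
    abel
  · simp only [Prod.snd_sub, hD_add, hD_bracket, h_compat, hg_add_right,
      hg_smul_right, hg_sub_left]
    rw [hbr, hg_sub_left, hg_symm Y X]
    ring
end

section
/- Let M be a smooth manifold, g a metric on M, and ∇ a connection on TM that is torsion-free and compatible with g, with curvature R. Then the connection ∇̃^s on F = TM ⊕ (M×ℝ) is flat — i.e., R^s(X,Y)(ξ,f) := ∇̃^s_X ∇̃^s_Y (ξ,f) − ∇̃^s_Y ∇̃^s_X (ξ,f) − ∇̃^s_{[X,Y]}(ξ,f) = (0,0) for all vector fields X, Y and all sections (ξ,f) — if and only if R(X,Y)ξ = g(Y,ξ)X − g(X,ξ)Y for all vector fields X, Y, ξ (the curvature identity of constant sectional curvature +1). -/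
/-!
Statement 0 (Shchepetilov, "The geometric sense of R. Sasaki connection").

We model the smooth functions `C^∞(M)` as a commutative ring `C`, the vector
fields on `M` as a module `V` over `C` equipped with a Lie bracket
`bracket : V → V → V` and an action `D : V → C → C` of vector fields on
functions by derivations (with the bracket acting as the commutator of
derivations).  A metric `g` is a symmetric `C`-bilinear form with values in
`C`, and `nabla` is a torsion-free connection compatible with `g`.

A section of `F = TM ⊕ (M × ℝ)` is a pair `(ξ, f) : V × C`, and
`∇̃ˢ_X (ξ, f) = (∇_X ξ + f • X, X f − g(X, ξ))`.

The claim: `∇̃ˢ` is flat (its curvature `Rˢ` vanishes on all vector fields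
and sections) if and only if `R(X,Y)ξ = g(Y,ξ) • X − g(X,ξ) • Y` for all
vector fields `X, Y, ξ` (the curvature identity of constant sectional
curvature `+1`).
-/
theorem sasaki_flat_iff_constant_curvature_one
    (C : Type*) [CommRing C]
    (V : Type*) [AddCommGroup V] [Module C V]
    (bracket : V → V → V)
    (D : V → C → C)
    (g : V → V → C)
    (nabla : V → V → V)
    -- vector fields act on functions as derivations,
    -- the bracket acting as the commutator
    (hD_add : ∀ X a b, D X (a + b) = D X a + D X b)
    (hD_mul : ∀ X a b, D X (a * b) = D X a * b + a * D X b)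
    (hD_addX : ∀ X Y a, D (X + Y) a = D X a + D Y a)
    (hD_smulX : ∀ (u : C) X a, D (u • X) a = u * D X a)
    (hD_bracket : ∀ X Y a, D (bracket X Y) a = D X (D Y a) - D Y (D X a))
    -- `g` is a symmetric `C`-bilinear form
    (hg_symm : ∀ X Y, g X Y = g Y X)
    (hg_add_left : ∀ X Y Z, g (X + Y) Z = g X Z + g Y Z)
    (hg_smul_left : ∀ (u : C) X Y, g (u • X) Y = u * g X Y)
    -- `nabla` is a connection: `C`-linear in the lower argument,
    -- additive and Leibniz in the upper argument
    (hn_addX : ∀ X Y ξ, nabla (X + Y) ξ = nabla X ξ + nabla Y ξ)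
    (hn_smulX : ∀ (u : C) X ξ, nabla (u • X) ξ = u • nabla X ξ)
    (hn_add : ∀ X ξ η, nabla X (ξ + η) = nabla X ξ + nabla X η)
    (hn_leibniz : ∀ X (u : C) ξ, nabla X (u • ξ) = D X u • ξ + u • nabla X ξ)
    -- `nabla` is torsion-free
    (h_torsion : ∀ X Y, nabla X Y - nabla Y X = bracket X Y)
    -- `nabla` is compatible with `g`
    (h_compat : ∀ X ξ η, D X (g ξ η) = g (nabla X ξ) η + g ξ (nabla X η))
 :
    -- the connection ∇̃ˢ on F = TM ⊕ (M×ℝ)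
    let nTs : V → V × C → V × C :=
      fun Z p => (nabla Z p.1 + p.2 • Z, D Z p.2 - g Z p.1)
    -- ∇̃ˢ is flat iff M has the curvature identity of constant curvature +1
    (∀ (X Y : V) (ξ : V) (f : C),
        nTs X (nTs Y (ξ, f)) - nTs Y (nTs X (ξ, f)) - nTs (bracket X Y) (ξ, f)
          = ((0 : V), (0 : C)))
      ↔ (∀ X Y ξ : V,
          nabla X (nabla Y ξ) - nabla Y (nabla X ξ) - nabla (bracket X Y) ξ
            = g Y ξ • X - g X ξ • Y) := by
  intro nTs
  have hD_sub : ∀ X (a b : C), D X (a - b) = D X a - D X b := by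
    intro X a b
    have h := hD_add X (a - b) b
    rw [sub_add_cancel] at h
    linear_combination -h
  have hg_sub_left : ∀ X Y Z, g (X - Y) Z = g X Z - g Y Z := by
    intro X Y Z
    have h := hg_add_left (X - Y) Y Z
    rw [sub_add_cancel] at h
    linear_combination -h
  have key : ∀ (X Y ξ : V) (f : C),
      nTs X (nTs Y (ξ, f)) - nTs Y (nTs X (ξ, f)) - nTs (bracket X Y) (ξ, f)
        = (nabla X (nabla Y ξ) - nabla Y (nabla X ξ) - nabla (bracket X Y) ξ
            - (g Y ξ • X - g X ξ • Y), 0) := by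
    intro X Y ξ f
    simp only [nTs, Prod.mk_sub_mk, Prod.mk.injEq]
    constructor
    · rw [show f • bracket X Y = f • nabla X Y - f • nabla Y X from by
        rw [← h_torsion, smul_sub]]
      simp only [hn_add, hn_leibniz, sub_smul]
      abel
    · rw [show g (bracket X Y) ξ = g (nabla X Y) ξ - g (nabla Y X) ξ from by
        rw [← h_torsion, hg_sub_left]]
      rw [hg_symm X (nabla Y ξ + f • Y), hg_symm Y (nabla X ξ + f • X)]
      simp only [hg_add_left, hg_smul_left, hD_sub, hD_bracket, h_compat]
      rw [hg_symm (nabla Y ξ) X, hg_symm (nabla X ξ) Y, hg_symm Y X]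
      ring
  constructor
  · intro h X Y ξ
    have h0 := key X Y ξ 0
    rw [h X Y ξ 0, Prod.mk.injEq] at h0
    have := h0.1.symm
    rw [sub_eq_zero] at this
    exact this
  · intro h X Y ξ f
    rw [key X Y ξ f, h X Y ξ, sub_self]
end

section
/- Let M be a smooth manifold, g a metric on M, and ∇ a connection on TM that is torsion-free and compatible with g, with curvature R. Then the connection ∇̃^h on F = TM ⊕ (M×ℝ) is flat — i.e., R^h(X,Y)(ξ,f) := ∇̃^h_X ∇̃^h_Y (ξ,f) − ∇̃^h_Y ∇̃^h_X (ξ,f) − ∇̃^h_{[X,Y]}(ξ,f) = (0,0) for all vector fields X, Y and all sections (ξ,f) — if and only if R(X,Y)ξ = −(g(Y,ξ)X − g(X,ξ)Y) for all vector fields X, Y, ξ (the curvature identity of constant sectional curvature −1). -/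
/-!
Statement 0 (Shchepetilov, "The geometric sense of R. Sasaki connection").

We model the smooth functions `C^∞(M)` as a commutative ring `C`, the vector
fields on `M` as a module `V` over `C` equipped with a Lie bracket
`bracket : V → V → V` and an action `D : V → C → C` of vector fields on
functions by derivations (with the bracket acting as the commutator of
derivations).  A metric `g` is a symmetric `C`-bilinear form with values in
`C`, and `nabla` is a torsion-free connection compatible with `g`.

A section of `F = TM ⊕ (M × ℝ)` is a pair `(ξ, f) : V × C`, and
`∇̃ʰ_X (ξ, f) = (∇_X ξ + f • X, X f + g(X, ξ))`.

The claim: `∇̃ʰ` is flat (its curvature `Rʰ` vanishes on all vector fields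
and sections) if and only if `R(X,Y)ξ = −(g(Y,ξ) • X − g(X,ξ) • Y)` for all
vector fields `X, Y, ξ` (the curvature identity of constant sectional
curvature `−1`).
-/
theorem sasaki_flat_iff_constant_curvature_minus_one
    (C : Type*) [CommRing C]
    (V : Type*) [AddCommGroup V] [Module C V]
    (bracket : V → V → V)
    (D : V → C → C)
    (g : V → V → C)
    (nabla : V → V → V)
    -- vector fields act on functions as derivations,
    -- the bracket acting as the commutator
    (hD_add : ∀ X a b, D X (a + b) = D X a + D X b)
    (hD_mul : ∀ X a b, D X (a * b) = D X a * b + a * D X b)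
    (hD_addX : ∀ X Y a, D (X + Y) a = D X a + D Y a)
    (hD_smulX : ∀ (u : C) X a, D (u • X) a = u * D X a)
    (hD_bracket : ∀ X Y a, D (bracket X Y) a = D X (D Y a) - D Y (D X a))
    -- `g` is a symmetric `C`-bilinear form
    (hg_symm : ∀ X Y, g X Y = g Y X)
    (hg_add_left : ∀ X Y Z, g (X + Y) Z = g X Z + g Y Z)
    (hg_smul_left : ∀ (u : C) X Y, g (u • X) Y = u * g X Y)
    -- `nabla` is a connection: `C`-linear in the lower argument,
    -- additive and Leibniz in the upper argument
    (hn_addX : ∀ X Y ξ, nabla (X + Y) ξ = nabla X ξ + nabla Y ξ)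
    (hn_smulX : ∀ (u : C) X ξ, nabla (u • X) ξ = u • nabla X ξ)
    (hn_add : ∀ X ξ η, nabla X (ξ + η) = nabla X ξ + nabla X η)
    (hn_leibniz : ∀ X (u : C) ξ, nabla X (u • ξ) = D X u • ξ + u • nabla X ξ)
    -- `nabla` is torsion-free
    (h_torsion : ∀ X Y, nabla X Y - nabla Y X = bracket X Y)
    -- `nabla` is compatible with `g`
    (h_compat : ∀ X ξ η, D X (g ξ η) = g (nabla X ξ) η + g ξ (nabla X η))
 :
    -- the connection ∇̃ʰ on F = TM ⊕ (M×ℝ)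
    let nTh : V → V × C → V × C :=
      fun Z p => (nabla Z p.1 + p.2 • Z, D Z p.2 + g Z p.1)
    -- ∇̃ʰ is flat iff M has the curvature identity of constant curvature −1
    (∀ (X Y : V) (ξ : V) (f : C),
        nTh X (nTh Y (ξ, f)) - nTh Y (nTh X (ξ, f)) - nTh (bracket X Y) (ξ, f)
          = ((0 : V), (0 : C)))
      ↔ (∀ X Y ξ : V,
          nabla X (nabla Y ξ) - nabla Y (nabla X ξ) - nabla (bracket X Y) ξ
            = -(g Y ξ • X - g X ξ • Y)) := by

  intro nTh
  -- neg/sub linearity of g derived from the hypotheses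
  have hg_neg_left : ∀ X Y : V, g (-X) Y = -(g X Y) := by
    intro X Y
    have := hg_smul_left (-1 : C) X Y
    simpa using this
  have hg_sub_left : ∀ X Y Z : V, g (X - Y) Z = g X Z - g Y Z := by
    intro X Y Z
    rw [sub_eq_add_neg, hg_add_left, hg_neg_left, sub_eq_add_neg]
  have hg_smul_right : ∀ (u : C) (X Y : V), g X (u • Y) = u * g X Y := by
    intro u X Y; rw [hg_symm, hg_smul_left, hg_symm]
  have hg_add_right : ∀ X Y Z : V, g X (Y + Z) = g X Y + g X Z := by
    intro X Y Z; rw [hg_symm, hg_add_left, hg_symm X Y, hg_symm X Z]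
  -- first component of the curvature of nTh
  have key1 : ∀ (X Y ξ : V) (f : C),
      (nTh X (nTh Y (ξ, f)) - nTh Y (nTh X (ξ, f)) - nTh (bracket X Y) (ξ, f)).1
        = (nabla X (nabla Y ξ) - nabla Y (nabla X ξ) - nabla (bracket X Y) ξ)
          + (g Y ξ • X - g X ξ • Y) := by
    intro X Y ξ f
    have hb : f • bracket X Y = f • nabla X Y - f • nabla Y X := by
      rw [← h_torsion, smul_sub]
    simp only [nTh, Prod.fst_sub]
    rw [hn_add, hn_add, hn_leibniz, hn_leibniz, hb, add_smul, add_smul]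
    abel
  -- second component of the curvature of nTh vanishes identically
  have key2 : ∀ (X Y ξ : V) (f : C),
      (nTh X (nTh Y (ξ, f)) - nTh Y (nTh X (ξ, f)) - nTh (bracket X Y) (ξ, f)).2
        = 0 := by
    intro X Y ξ f
    simp only [nTh, Prod.snd_sub]
    rw [hD_add, hD_add, hD_bracket, hg_add_right, hg_add_right,
      hg_smul_right, hg_smul_right, h_compat, h_compat, ← h_torsion,
      hg_sub_left, hg_symm X Y]
    ring
  constructor
  · intro h X Y ξ
    have h1 := congrArg Prod.fst (h X Y ξ 0)
    rw [key1] at h1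
    simp only [Prod.fst_zero] at h1
    exact eq_neg_of_add_eq_zero_left h1
  · intro h X Y ξ f
    have h1 : (nTh X (nTh Y (ξ, f)) - nTh Y (nTh X (ξ, f))
        - nTh (bracket X Y) (ξ, f)).1 = 0 := by
      rw [key1, h]; abel
    have h2 := key2 X Y ξ f
    exact Prod.ext h1 h2
end

section
/- Let M be a smooth manifold, g a metric on M, and ∇ a connection on TM compatible with g. Define the fiber metric g̃_s on F = TM ⊕ (M×ℝ) by g̃_s((ξ₁,f₁),(ξ₂,f₂)) = g(ξ₁,ξ₂) + f₁f₂. Then ∇̃^s is compatible with g̃_s: for every vector field X and all sections (ξ₁,f₁), (ξ₂,f₂) of F, one has X( g̃_s((ξ₁,f₁),(ξ₂,f₂)) ) = g̃_s( ∇̃^s_X(ξ₁,f₁), (ξ₂,f₂) ) + g̃_s( (ξ₁,f₁), ∇̃^s_X(ξ₂,f₂) ). -/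
/-!
Statement 4 (Shchepetilov, "The geometric sense of R. Sasaki connection").

We model the smooth functions `C^∞(M)` as a commutative ring `C`, the vector
fields on `M` as a module `V` over `C` equipped with an action `D : V → C → C`
of vector fields on functions by derivations.  A metric `g` is a symmetric
`C`-bilinear form with values in `C`, and `nabla` is a connection on `TM`
compatible with `g`.

A section of `F = TM ⊕ (M × ℝ)` is a pair `(ξ, f) : V × C`, and
`∇̃ˢ_X (ξ, f) = (∇_X ξ + f • X, X f − g(X, ξ))`.  The fiber metric on `F` is
`g̃ₛ((ξ₁,f₁),(ξ₂,f₂)) = g(ξ₁,ξ₂) + f₁·f₂`.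

The claim: `∇̃ˢ` is compatible with `g̃ₛ`.
-/
theorem sasaki_connection_sphere_metric_compatible
    (C : Type*) [CommRing C]
    (V : Type*) [AddCommGroup V] [Module C V]
    (D : V → C → C)
    (g : V → V → C)
    (nabla : V → V → V)
    -- vector fields act on functions as derivations
    (hD_add : ∀ X a b, D X (a + b) = D X a + D X b)
    (hD_mul : ∀ X a b, D X (a * b) = D X a * b + a * D X b)
    -- `g` is a symmetric `C`-bilinear form
    (hg_symm : ∀ X Y, g X Y = g Y X)
    (hg_add_left : ∀ X Y Z, g (X + Y) Z = g X Z + g Y Z)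
    (hg_smul_left : ∀ (u : C) X Y, g (u • X) Y = u * g X Y)
    -- `nabla` is a connection: `C`-linear in the lower argument,
    -- additive and Leibniz in the upper argument
    (hn_addX : ∀ X Y ξ, nabla (X + Y) ξ = nabla X ξ + nabla Y ξ)
    (hn_smulX : ∀ (u : C) X ξ, nabla (u • X) ξ = u • nabla X ξ)
    (hn_add : ∀ X ξ η, nabla X (ξ + η) = nabla X ξ + nabla X η)
    (hn_leibniz : ∀ X (u : C) ξ, nabla X (u • ξ) = D X u • ξ + u • nabla X ξ)
    -- `nabla` is compatible with `g`
    (h_compat : ∀ X ξ η, D X (g ξ η) = g (nabla X ξ) η + g ξ (nabla X η)) :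
    -- the connection ∇̃ˢ on F = TM ⊕ (M×ℝ)
    let nTs : V → V × C → V × C :=
      fun Z p => (nabla Z p.1 + p.2 • Z, D Z p.2 - g Z p.1)
    -- the fiber metric g̃ₛ on F
    let gs : V × C → V × C → C := fun p q => g p.1 q.1 + p.2 * q.2
    -- ∇̃ˢ is compatible with g̃ₛ
    ∀ (X : V) (ξ₁ ξ₂ : V) (f₁ f₂ : C),
      D X (gs (ξ₁, f₁) (ξ₂, f₂))
        = gs (nTs X (ξ₁, f₁)) (ξ₂, f₂) + gs (ξ₁, f₁) (nTs X (ξ₂, f₂)) := by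
  intro nTs gs X ξ₁ ξ₂ f₁ f₂
  simp only [nTs, gs, hD_add, hD_mul, h_compat]
  rw [hg_symm ξ₁ (nabla X ξ₂ + f₂ • X)]
  simp only [hg_add_left, hg_smul_left, hg_symm X ξ₁, hg_symm X ξ₂,
    hg_symm (nabla X ξ₂) ξ₁]
  ring
end

section
/- Let M be a smooth manifold, g a metric on M, and ∇ a connection on TM compatible with g. Define the (indefinite) fiber metric g̃_h on F = TM ⊕ (M×ℝ) by g̃_h((ξ₁,f₁),(ξ₂,f₂)) = g(ξ₁,ξ₂) − f₁f₂. Then ∇̃^h is compatible with g̃_h: for every vector field X and all sections (ξ₁,f₁), (ξ₂,f₂) of F, one has X( g̃_h((ξ₁,f₁),(ξ₂,f₂)) ) = g̃_h( ∇̃^h_X(ξ₁,f₁), (ξ₂,f₂) ) + g̃_h( (ξ₁,f₁), ∇̃^h_X(ξ₂,f₂) ). -/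
/-!
Statement 4 (Shchepetilov, "The geometric sense of R. Sasaki connection").

We model the smooth functions `C^∞(M)` as a commutative ring `C`, the vector
fields on `M` as a module `V` over `C` equipped with an action `D : V → C → C`
of vector fields on functions by derivations.  A metric `g` is a symmetric
`C`-bilinear form with values in `C`, and `nabla` is a connection on `TM`
compatible with `g`.

A section of `F = TM ⊕ (M × ℝ)` is a pair `(ξ, f) : V × C`, and
`∇̃ʰ_X (ξ, f) = (∇_X ξ + f • X, X f + g(X, ξ))`.  The (indefinite) fiber
metric on `F` is `g̃ₕ((ξ₁,f₁),(ξ₂,f₂)) = g(ξ₁,ξ₂) − f₁·f₂`.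

The claim: `∇̃ʰ` is compatible with `g̃ₕ`.
-/
theorem sasaki_connection_hyperbolic_metric_compatible
    (C : Type*) [CommRing C]
    (V : Type*) [AddCommGroup V] [Module C V]
    (D : V → C → C)
    (g : V → V → C)
    (nabla : V → V → V)
    -- vector fields act on functions as derivations
    (hD_add : ∀ X a b, D X (a + b) = D X a + D X b)
    (hD_mul : ∀ X a b, D X (a * b) = D X a * b + a * D X b)
    -- `g` is a symmetric `C`-bilinear form
    (hg_symm : ∀ X Y, g X Y = g Y X)
    (hg_add_left : ∀ X Y Z, g (X + Y) Z = g X Z + g Y Z)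
    (hg_smul_left : ∀ (u : C) X Y, g (u • X) Y = u * g X Y)
    -- `nabla` is a connection: `C`-linear in the lower argument,
    -- additive and Leibniz in the upper argument
    (hn_addX : ∀ X Y ξ, nabla (X + Y) ξ = nabla X ξ + nabla Y ξ)
    (hn_smulX : ∀ (u : C) X ξ, nabla (u • X) ξ = u • nabla X ξ)
    (hn_add : ∀ X ξ η, nabla X (ξ + η) = nabla X ξ + nabla X η)
    (hn_leibniz : ∀ X (u : C) ξ, nabla X (u • ξ) = D X u • ξ + u • nabla X ξ)
    -- `nabla` is compatible with `g`
    (h_compat : ∀ X ξ η, D X (g ξ η) = g (nabla X ξ) η + g ξ (nabla X η)) :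
    -- the connection ∇̃ʰ on F = TM ⊕ (M×ℝ)
    let nTh : V → V × C → V × C :=
      fun Z p => (nabla Z p.1 + p.2 • Z, D Z p.2 + g Z p.1)
    -- the indefinite fiber metric g̃ₕ on F
    let gh : V × C → V × C → C := fun p q => g p.1 q.1 - p.2 * q.2
    -- ∇̃ʰ is compatible with g̃ₕ
    ∀ (X : V) (ξ₁ ξ₂ : V) (f₁ f₂ : C),
      D X (gh (ξ₁, f₁) (ξ₂, f₂))
        = gh (nTh X (ξ₁, f₁)) (ξ₂, f₂) + gh (ξ₁, f₁) (nTh X (ξ₂, f₂)) := by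
  intro nTh gh X ξ₁ ξ₂ f₁ f₂
  have hD_sub : ∀ X a b, D X (a - b) = D X a - D X b := by
    intro X a b
    have := hD_add X (a - b) b
    rw [sub_add_cancel] at this
    linear_combination -this
  have hg_add_right : ∀ X Y Z, g X (Y + Z) = g X Y + g X Z := by
    intro X Y Z; rw [hg_symm, hg_add_left, hg_symm Y X, hg_symm Z X]
  have hg_smul_right : ∀ (u : C) X Y, g X (u • Y) = u * g X Y := by
    intro u X Y; rw [hg_symm, hg_smul_left, hg_symm]
  simp only [nTh, gh, hD_sub, h_compat, hD_mul, hg_add_left, hg_add_right,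
    hg_smul_left, hg_smul_right, hg_symm X ξ₁, hg_symm X ξ₂]
  ring
end

section
/- Let M be a smooth manifold and let ω¹, ω², τ be smooth 1-forms on M satisfying the structure equations dω¹ = ω² ∧ τ, dω² = −ω¹ ∧ τ, and dτ = K·(ω¹ ∧ ω²) for a smooth function K. Let σ̄₁, σ̄₂, σ̄₃ be the 3×3 real matrices σ̄₁ = E₁₃+E₃₁, σ̄₂ = E₂₃+E₃₂, σ̄₃ = E₁₂−E₂₁ (where E_{ij} is the matrix unit), and let A = σ̄₁ω¹ + σ̄₂ω² + σ̄₃τ be the corresponding matrix-valued 1-form. Then the curvature Ω of A satisfies Ω(X,Y) = (K+1)·(ω¹∧ω²)(X,Y)·σ̄₃ for all vector fields X, Y. Consequently, if at every point p of M there exist vector fields X, Y with (ω¹∧ω²)(X,Y)(p) ≠ 0, then Ω vanishes identically if and only if K ≡ −1. -/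
/-!
The matrices `σ̄₁, σ̄₂, σ̄₃` span `so(2,1)` with `[σ̄₁,σ̄₂] = σ̄₃`, `[σ̄₂,σ̄₃] = -σ̄₁`,
`[σ̄₃,σ̄₁] = -σ̄₂`. Hence the curvature `dA + [A,A]` of `A = σ̄₁ω¹ + σ̄₂ω² + σ̄₃τ` is again
in `so(2,1)`, with coefficients `dω¹ - ω²∧τ`, `dω² + ω¹∧τ` and `dτ + ω¹∧ω²`. The structure
equations kill the first two and turn the third into `(K+1) ω¹∧ω²`.
-/

section So21Matrix

variable {R : Type*}

def so21Matrix [Zero R] [Neg R] (a b c : R) : Matrix (Fin 3) (Fin 3) R :=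
  !![0, c, a; -c, 0, b; a, b, 0]

theorem so21Matrix_map [AddGroup R] {S : Type*} [AddGroup S] (φ : R →+ S) (a b c : R) :
    (so21Matrix a b c).map φ = so21Matrix (φ a) (φ b) (φ c) := by
  ext i j
  fin_cases i <;> fin_cases j <;> simp [so21Matrix]

theorem so21Matrix_add [AddCommGroup R] (a b c a' b' c' : R) :
    so21Matrix a b c + so21Matrix a' b' c' = so21Matrix (a + a') (b + b') (c + c') := by
  ext i j
  fin_cases i <;> fin_cases j <;> simp [so21Matrix, add_comm]

theorem so21Matrix_sub [AddCommGroup R] (a b c a' b' c' : R) :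
    so21Matrix a b c - so21Matrix a' b' c' = so21Matrix (a - a') (b - b') (c - c') := by
  ext i j
  fin_cases i <;> fin_cases j <;> simp [so21Matrix, neg_add_eq_sub]

theorem so21Matrix_eq_zero_iff [AddGroup R] {a b c : R} :
    so21Matrix a b c = 0 ↔ a = 0 ∧ b = 0 ∧ c = 0 := by
  constructor
  · intro h
    exact ⟨congrFun₂ h 0 2, congrFun₂ h 1 2, congrFun₂ h 0 1⟩
  · rintro ⟨rfl, rfl, rfl⟩
    ext i j
    fin_cases i <;> fin_cases j <;> simp [so21Matrix]

theorem so21Matrix_mul_sub_mul [CommRing R] (a b c a' b' c' : R) :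
    so21Matrix a b c * so21Matrix a' b' c' - so21Matrix a' b' c' * so21Matrix a b c
      = so21Matrix (c * b' - b * c') (a * c' - c * a') (a * b' - b * a') := by
  ext i j
  fin_cases i <;> fin_cases j <;>
    simp [so21Matrix] <;> ring

theorem smul_add_smul_add_smul_eq_so21Matrix [Ring R] (a b c : R) :
    a • !![(0 : R), 0, 1; 0, 0, 0; 1, 0, 0] + b • !![(0 : R), 0, 0; 0, 0, 1; 0, 1, 0]
      + c • !![(0 : R), 1, 0; -1, 0, 0; 0, 0, 0] = so21Matrix a b c := by
  ext i j
  fin_cases i <;> fin_cases j <;> simp [so21Matrix]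

theorem so21Matrix_zero_zero [Ring R] (c : R) :
    so21Matrix 0 0 c = c • !![(0 : R), 1, 0; -1, 0, 0; 0, 0, 0] := by
  rw [← smul_add_smul_add_smul_eq_so21Matrix, zero_smul, zero_smul, zero_add, zero_add]

end So21Matrix

section Curvature

variable {R V : Type*} [CommRing R] (bracket : V → V → V) (D : V → R → R)

def exteriorDeriv (ω : V → R) (X Y : V) : R :=
  D X (ω Y) - D Y (ω X) - ω (bracket X Y)

def wedge (ω η : V → R) (X Y : V) : R :=
  ω X * η Y - ω Y * η X

def curvature (A : V → Matrix (Fin 3) (Fin 3) R) (X Y : V) : Matrix (Fin 3) (Fin 3) R :=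
  (A Y).map (D X) - (A X).map (D Y) - A (bracket X Y) + (A X * A Y - A Y * A X)

theorem curvature_so21Matrix (hD_add : ∀ X a b, D X (a + b) = D X a + D X b)
    (ω1 ω2 τ : V → R) (X Y : V) :
    curvature bracket D (fun Z => so21Matrix (ω1 Z) (ω2 Z) (τ Z)) X Y
      = so21Matrix (exteriorDeriv bracket D ω1 X Y - wedge ω2 τ X Y)
          (exteriorDeriv bracket D ω2 X Y + wedge ω1 τ X Y)
          (exteriorDeriv bracket D τ X Y + wedge ω1 ω2 X Y) := by
  have hX := so21Matrix_map (AddMonoidHom.mk' (D X) (hD_add X)) (ω1 Y) (ω2 Y) (τ Y)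
  have hY := so21Matrix_map (AddMonoidHom.mk' (D Y) (hD_add Y)) (ω1 X) (ω2 X) (τ X)
  simp only [AddMonoidHom.mk'_apply] at hX hY
  rw [curvature, hX, hY, so21Matrix_mul_sub_mul, so21Matrix_sub, so21Matrix_sub, so21Matrix_add]
  congr 1 <;> simp only [exteriorDeriv, wedge] <;> ring

end Curvature

theorem sasaki_so21_form_curvature_general
    (M : Type*)
    (V : Type*)
    (bracket : V → V → V)
    (D : V → (M → ℝ) → (M → ℝ))
    -- vector fields act on functions as derivations
    (hD_add : ∀ X a b, D X (a + b) = D X a + D X b)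
    -- the 1-forms ω¹, ω², τ and the function K
    (ω1 ω2 τ : V → M → ℝ) (K : M → ℝ)
    -- the structure equations dω¹ = ω² ∧ τ, dω² = −ω¹ ∧ τ, dτ = K·(ω¹ ∧ ω²)
    (hstr1 : ∀ X Y, D X (ω1 Y) - D Y (ω1 X) - ω1 (bracket X Y)
      = ω2 X * τ Y - ω2 Y * τ X)
    (hstr2 : ∀ X Y, D X (ω2 Y) - D Y (ω2 X) - ω2 (bracket X Y)
      = -(ω1 X * τ Y - ω1 Y * τ X))
    (hstr3 : ∀ X Y, D X (τ Y) - D Y (τ X) - τ (bracket X Y)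
      = K * (ω1 X * ω2 Y - ω1 Y * ω2 X)) :
    -- the matrices σ̄₁ = E₁₃+E₃₁, σ̄₂ = E₂₃+E₃₂, σ̄₃ = E₁₂−E₂₁
    let s1 : Matrix (Fin 3) (Fin 3) (M → ℝ) := !![0,0,1; 0,0,0; 1,0,0]
    let s2 : Matrix (Fin 3) (Fin 3) (M → ℝ) := !![0,0,0; 0,0,1; 0,1,0]
    let s3 : Matrix (Fin 3) (Fin 3) (M → ℝ) := !![0,1,0; -1,0,0; 0,0,0]
    -- the matrix-valued 1-form A = σ̄₁ω¹ + σ̄₂ω² + σ̄₃τ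
    let A : V → Matrix (Fin 3) (Fin 3) (M → ℝ) :=
      fun X => ω1 X • s1 + ω2 X • s2 + τ X • s3
    -- its curvature Ω(X,Y) = X(A(Y)) − Y(A(X)) − A([X,Y]) + [A(X),A(Y)]
    let Ω : V → V → Matrix (Fin 3) (Fin 3) (M → ℝ) :=
      fun X Y => (A Y).map (D X) - (A X).map (D Y) - A (bracket X Y)
        + (A X * A Y - A Y * A X)
    -- the curvature identity Ω(X,Y) = (K+1)·(ω¹∧ω²)(X,Y)·σ̄₃ ...
    (∀ X Y, Ω X Y = ((K + 1) * (ω1 X * ω2 Y - ω1 Y * ω2 X)) • s3)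
    -- ... and the consequence: if ω¹∧ω² is nowhere zero,
    -- then Ω ≡ 0 iff K ≡ −1
    ∧ ((∀ p : M, ∃ X Y, (ω1 X * ω2 Y - ω1 Y * ω2 X) p ≠ 0) →
        ((∀ X Y, Ω X Y = 0) ↔ ∀ p : M, K p = -1)) := by
  intro s1 s2 s3 A Ω
  have hA : A = fun X => so21Matrix (ω1 X) (ω2 X) (τ X) :=
    funext fun X => smul_add_smul_add_smul_eq_so21Matrix _ _ _
  have hΩ : ∀ X Y, Ω X Y = so21Matrix 0 0 ((K + 1) * wedge ω1 ω2 X Y) := by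
    intro X Y
    change curvature bracket D A X Y = _
    have h1 : exteriorDeriv bracket D ω1 X Y = wedge ω2 τ X Y := hstr1 X Y
    have h2 : exteriorDeriv bracket D ω2 X Y = -wedge ω1 τ X Y := hstr2 X Y
    have h3 : exteriorDeriv bracket D τ X Y = K * wedge ω1 ω2 X Y := hstr3 X Y
    rw [hA, curvature_so21Matrix bracket D hD_add, h1, h2, h3, sub_self, neg_add_cancel,
      add_one_mul]
  refine ⟨fun X Y => (hΩ X Y).trans (so21Matrix_zero_zero _), fun hnz => ?_⟩
  simp only [hΩ, so21Matrix_eq_zero_iff, true_and]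
  constructor
  · intro h p
    obtain ⟨X, Y, hp⟩ := hnz p
    have hKp := congrFun (h X Y) p
    simp only [Pi.mul_apply, Pi.add_apply, Pi.one_apply, Pi.zero_apply, mul_eq_zero] at hKp
    exact hKp.elim eq_neg_of_add_eq_zero_left (absurd · hp)
  · intro hK X Y
    funext p
    simp [hK p]

theorem sasaki_so21_form_curvature
    (M : Type*)
    (V : Type*) [AddCommGroup V] [Module (M → ℝ) V]
    (bracket : V → V → V)
    (D : V → (M → ℝ) → (M → ℝ))
    -- vector fields act on functions as derivations
    (hD_add : ∀ X a b, D X (a + b) = D X a + D X b)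
    (hD_mul : ∀ X a b, D X (a * b) = D X a * b + a * D X b)
    -- the 1-forms ω¹, ω², τ and the function K
    (ω1 ω2 τ : V → M → ℝ) (K : M → ℝ)
    -- the 1-forms are C^∞(M)-linear in the vector field
    (hω1_add : ∀ X Y, ω1 (X + Y) = ω1 X + ω1 Y)
    (hω1_smul : ∀ (u : M → ℝ) X, ω1 (u • X) = u * ω1 X)
    (hω2_add : ∀ X Y, ω2 (X + Y) = ω2 X + ω2 Y)
    (hω2_smul : ∀ (u : M → ℝ) X, ω2 (u • X) = u * ω2 X)
    (hτ_add : ∀ X Y, τ (X + Y) = τ X + τ Y)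
    (hτ_smul : ∀ (u : M → ℝ) X, τ (u • X) = u * τ X)
    -- the structure equations dω¹ = ω² ∧ τ, dω² = −ω¹ ∧ τ, dτ = K·(ω¹ ∧ ω²)
    (hstr1 : ∀ X Y, D X (ω1 Y) - D Y (ω1 X) - ω1 (bracket X Y)
      = ω2 X * τ Y - ω2 Y * τ X)
    (hstr2 : ∀ X Y, D X (ω2 Y) - D Y (ω2 X) - ω2 (bracket X Y)
      = -(ω1 X * τ Y - ω1 Y * τ X))
    (hstr3 : ∀ X Y, D X (τ Y) - D Y (τ X) - τ (bracket X Y)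
      = K * (ω1 X * ω2 Y - ω1 Y * ω2 X)) :
    -- the matrices σ̄₁ = E₁₃+E₃₁, σ̄₂ = E₂₃+E₃₂, σ̄₃ = E₁₂−E₂₁
    let s1 : Matrix (Fin 3) (Fin 3) (M → ℝ) := !![0,0,1; 0,0,0; 1,0,0]
    let s2 : Matrix (Fin 3) (Fin 3) (M → ℝ) := !![0,0,0; 0,0,1; 0,1,0]
    let s3 : Matrix (Fin 3) (Fin 3) (M → ℝ) := !![0,1,0; -1,0,0; 0,0,0]
    -- the matrix-valued 1-form A = σ̄₁ω¹ + σ̄₂ω² + σ̄₃τ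
    let A : V → Matrix (Fin 3) (Fin 3) (M → ℝ) :=
      fun X => ω1 X • s1 + ω2 X • s2 + τ X • s3
    -- its curvature Ω(X,Y) = X(A(Y)) − Y(A(X)) − A([X,Y]) + [A(X),A(Y)]
    let Ω : V → V → Matrix (Fin 3) (Fin 3) (M → ℝ) :=
      fun X Y => (A Y).map (D X) - (A X).map (D Y) - A (bracket X Y)
        + (A X * A Y - A Y * A X)
    -- the curvature identity Ω(X,Y) = (K+1)·(ω¹∧ω²)(X,Y)·σ̄₃ ...
    (∀ X Y, Ω X Y = ((K + 1) * (ω1 X * ω2 Y - ω1 Y * ω2 X)) • s3)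
    -- ... and the consequence: if ω¹∧ω² is nowhere zero,
    -- then Ω ≡ 0 iff K ≡ −1
    ∧ ((∀ p : M, ∃ X Y, (ω1 X * ω2 Y - ω1 Y * ω2 X) p ≠ 0) →
        ((∀ X Y, Ω X Y = 0) ↔ ∀ p : M, K p = -1)) :=
  sasaki_so21_form_curvature_general M V bracket D hD_add ω1 ω2 τ K hstr1 hstr2 hstr3
end

section
/- Let M be a smooth manifold and let ω¹, ω², τ be smooth 1-forms on M satisfying the structure equations dω¹ = ω² ∧ τ, dω² = −ω¹ ∧ τ, and dτ = K·(ω¹ ∧ ω²) for a smooth function K. Let σ₁ = ½[[0,−1],[−1,0]], σ₂ = ½[[1,0],[0,−1]], σ₃ = ½[[0,1],[−1,0]] in sl(2,ℝ), and let A = σ₁ω¹ + σ₂ω² + σ₃τ (Sasaki's connection form). Then the curvature Ω of A satisfies Ω(X,Y) = (K+1)·(ω¹∧ω²)(X,Y)·σ₃ for all vector fields X, Y. Consequently, if at every point p of M there exist vector fields X, Y with (ω¹∧ω²)(X,Y)(p) ≠ 0, then Ω vanishes identically if and only if K ≡ −1. -/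
/-!
Statement 8 (Shchepetilov, "The geometric sense of R. Sasaki connection").

We model the smooth functions on `M` as the (pointwise) ring `M → ℝ`, and the
vector fields as a module `V` over `M → ℝ` with a Lie bracket and an action
`D : V → (M → ℝ) → (M → ℝ)` by derivations.  A 1-form assigns to each vector
field a function, `C^∞(M)`-linearly; its exterior derivative is
`dω(X,Y) = X(ω(Y)) − Y(ω(X)) − ω([X,Y])` and
`(ω ∧ η)(X,Y) = ω(X)η(Y) − ω(Y)η(X)`.

Given 1-forms `ω¹, ω², τ` with `dω¹ = ω² ∧ τ`, `dω² = −ω¹ ∧ τ`,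
`dτ = K·(ω¹ ∧ ω²)`, and the `sl(2,ℝ)` matrices
`σ₁ = ½[[0,−1],[−1,0]]`, `σ₂ = ½[[1,0],[0,−1]]`, `σ₃ = ½[[0,1],[−1,0]]`, set
`A = σ₁ω¹ + σ₂ω² + σ₃τ` (Sasaki's connection form).  The curvature of `A` is
`Ω(X,Y) = X(A(Y)) − Y(A(X)) − A([X,Y]) + [A(X),A(Y)]` (applied entrywise).

The claim: `Ω(X,Y) = (K+1)·(ω¹∧ω²)(X,Y)·σ₃`; consequently, if at every
point `p` there are vector fields `X, Y` with `(ω¹∧ω²)(X,Y)(p) ≠ 0`, then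
`Ω ≡ 0` iff `K ≡ −1`.
-/

lemma sasaki_aux {M : Type*} (a1 a2 a3 b1 b2 b3 d1 d2 d3 e1 e2 e3 k : M → ℝ)
    (s1 s2 s3 : Matrix (Fin 2) (Fin 2) (M → ℝ))
    (hs1 : s1 = !![0, -(1/2); -(1/2), 0])
    (hs2 : s2 = !![1/2, 0; 0, -(1/2)])
    (hs3 : s3 = !![0, 1/2; -(1/2), 0]) :
    (d1 • s1 + d2 • s2 + d3 • s3) - (e1 • s1 + e2 • s2 + e3 • s3)
      - ((d1 - e1 - (a2*b3 - b2*a3)) • s1 + (d2 - e2 + (a1*b3 - b1*a3)) • s2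
          + (d3 - e3 - k*(a1*b2 - b1*a2)) • s3)
      + ((a1 • s1 + a2 • s2 + a3 • s3) * (b1 • s1 + b2 • s2 + b3 • s3)
        - (b1 • s1 + b2 • s2 + b3 • s3) * (a1 • s1 + a2 • s2 + a3 • s3))
    = ((k + 1) * (a1 * b2 - b1 * a2)) • s3 := by
  subst hs1 hs2 hs3
  ext i j p
  fin_cases i <;> fin_cases j <;>
    · simp only [Matrix.sub_apply, Matrix.add_apply, Matrix.smul_apply,
        Matrix.mul_apply, Fin.sum_univ_two, smul_eq_mul, Fin.mk_zero, Fin.mk_one,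
        Matrix.cons_val', Matrix.cons_val_zero, Matrix.cons_val_one, Matrix.head_cons,
        Matrix.empty_val', Matrix.cons_val_fin_one, Matrix.head_fin_const,
        Matrix.of_apply, Fin.isValue,
        Pi.add_apply, Pi.sub_apply, Pi.mul_apply, Pi.neg_apply,
        Pi.zero_apply, Pi.one_apply, Pi.div_apply, Pi.ofNat_apply]
      ring

lemma sasaki_map_aux {M : Type*} (d : (M → ℝ) → (M → ℝ))
    (hadd : ∀ a b, d (a + b) = d a + d b)
    (hmul : ∀ a b, d (a * b) = d a * b + a * d b)
    (f g t : M → ℝ)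
    (s1 s2 s3 : Matrix (Fin 2) (Fin 2) (M → ℝ))
    (hs1 : s1 = !![0, -(1/2); -(1/2), 0])
    (hs2 : s2 = !![1/2, 0; 0, -(1/2)])
    (hs3 : s3 = !![0, 1/2; -(1/2), 0]) :
    (f • s1 + g • s2 + t • s3).map d
      = d f • s1 + d g • s2 + d t • s3 := by
  subst hs1 hs2 hs3
  have h0 : d 0 = 0 := by
    have h := hadd 0 0
    rw [add_zero] at h
    exact (add_eq_left.mp h.symm)
  have h1 : d 1 = 0 := by
    have h := hmul 1 1
    rw [mul_one, one_mul, mul_one] at h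
    exact (add_eq_left.mp h.symm)
  have hhalf : d ((1/2 : M → ℝ)) = 0 := by
    have e : ((1/2 : M → ℝ)) + 1/2 = 1 := by
      funext p; norm_num
    have h := hadd (1/2) (1/2)
    rw [e, h1] at h
    funext p
    have hp := congrFun h.symm p
    simp only [Pi.add_apply, Pi.zero_apply] at hp ⊢
    linarith
  have hneghalf : d (-(1/2 : M → ℝ)) = 0 := by
    have e : ((1/2 : M → ℝ)) + (-(1/2)) = 0 := by funext p; norm_num
    have h := hadd (1/2) (-(1/2))
    rw [e, h0, hhalf, zero_add] at h
    exact h.symm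
  have hhalf2 : d ((2⁻¹ : M → ℝ)) = 0 := by
    have e : ((2⁻¹ : M → ℝ)) = 1/2 := by funext p; norm_num
    rw [e]; exact hhalf
  have hdneg : ∀ a, d (-a) = -d a := by
    intro a
    have h := hadd a (-a)
    rw [add_neg_cancel, h0] at h
    exact (eq_neg_of_add_eq_zero_right h.symm)
  ext i j
  fin_cases i <;> fin_cases j <;>
    simp [Matrix.map_apply, hadd, hmul, hdneg, hhalf, hneghalf, hhalf2, h0, h1]

theorem sasaki_sl2_form_curvature
    (M : Type*)
    (V : Type*) [AddCommGroup V] [Module (M → ℝ) V]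
    (bracket : V → V → V)
    (D : V → (M → ℝ) → (M → ℝ))
    -- vector fields act on functions as derivations
    (hD_add : ∀ X a b, D X (a + b) = D X a + D X b)
    (hD_mul : ∀ X a b, D X (a * b) = D X a * b + a * D X b)
    -- the 1-forms ω¹, ω², τ and the function K
    (ω1 ω2 τ : V → M → ℝ) (K : M → ℝ)
    -- the 1-forms are C^∞(M)-linear in the vector field
    (hω1_add : ∀ X Y, ω1 (X + Y) = ω1 X + ω1 Y)
    (hω1_smul : ∀ (u : M → ℝ) X, ω1 (u • X) = u * ω1 X)
    (hω2_add : ∀ X Y, ω2 (X + Y) = ω2 X + ω2 Y)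
    (hω2_smul : ∀ (u : M → ℝ) X, ω2 (u • X) = u * ω2 X)
    (hτ_add : ∀ X Y, τ (X + Y) = τ X + τ Y)
    (hτ_smul : ∀ (u : M → ℝ) X, τ (u • X) = u * τ X)
    -- the structure equations dω¹ = ω² ∧ τ, dω² = −ω¹ ∧ τ, dτ = K·(ω¹ ∧ ω²)
    (hstr1 : ∀ X Y, D X (ω1 Y) - D Y (ω1 X) - ω1 (bracket X Y)
      = ω2 X * τ Y - ω2 Y * τ X)
    (hstr2 : ∀ X Y, D X (ω2 Y) - D Y (ω2 X) - ω2 (bracket X Y)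
      = -(ω1 X * τ Y - ω1 Y * τ X))
    (hstr3 : ∀ X Y, D X (τ Y) - D Y (τ X) - τ (bracket X Y)
      = K * (ω1 X * ω2 Y - ω1 Y * ω2 X)) :
    -- the matrices σ₁ = ½[[0,−1],[−1,0]], σ₂ = ½[[1,0],[0,−1]], σ₃ = ½[[0,1],[−1,0]]
    let s1 : Matrix (Fin 2) (Fin 2) (M → ℝ) := !![0, -(1/2); -(1/2), 0]
    let s2 : Matrix (Fin 2) (Fin 2) (M → ℝ) := !![1/2, 0; 0, -(1/2)]
    let s3 : Matrix (Fin 2) (Fin 2) (M → ℝ) := !![0, 1/2; -(1/2), 0]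
    -- the matrix-valued 1-form A = σ₁ω¹ + σ₂ω² + σ₃τ
    let A : V → Matrix (Fin 2) (Fin 2) (M → ℝ) :=
      fun X => ω1 X • s1 + ω2 X • s2 + τ X • s3
    -- its curvature Ω(X,Y) = X(A(Y)) − Y(A(X)) − A([X,Y]) + [A(X),A(Y)]
    let Ω : V → V → Matrix (Fin 2) (Fin 2) (M → ℝ) :=
      fun X Y => (A Y).map (D X) - (A X).map (D Y) - A (bracket X Y)
        + (A X * A Y - A Y * A X)
    -- the curvature identity Ω(X,Y) = (K+1)·(ω¹∧ω²)(X,Y)·σ₃ ...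
    (∀ X Y, Ω X Y = ((K + 1) * (ω1 X * ω2 Y - ω1 Y * ω2 X)) • s3)
    -- ... and the consequence: if ω¹∧ω² is nowhere zero,
    -- then Ω ≡ 0 iff K ≡ −1
    ∧ ((∀ p : M, ∃ X Y, (ω1 X * ω2 Y - ω1 Y * ω2 X) p ≠ 0) →
        ((∀ X Y, Ω X Y = 0) ↔ ∀ p : M, K p = -1)) := by

  intro s1 s2 s3 A Ω
  have key : ∀ X Y, Ω X Y = ((K + 1) * (ω1 X * ω2 Y - ω1 Y * ω2 X)) • s3 := by
    intro X Y
    have b1 : ω1 (bracket X Y)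
        = D X (ω1 Y) - D Y (ω1 X) - (ω2 X * τ Y - ω2 Y * τ X) := by
      linear_combination -(hstr1 X Y)
    have b2 : ω2 (bracket X Y)
        = D X (ω2 Y) - D Y (ω2 X) + (ω1 X * τ Y - ω1 Y * τ X) := by
      linear_combination -(hstr2 X Y)
    have b3 : τ (bracket X Y)
        = D X (τ Y) - D Y (τ X) - K * (ω1 X * ω2 Y - ω1 Y * ω2 X) := by
      linear_combination -(hstr3 X Y)
    have hA : ∀ Z, A Z = ω1 Z • s1 + ω2 Z • s2 + τ Z • s3 := fun Z => rfl
    have e : Ω X Y = (A Y).map (D X) - (A X).map (D Y) - A (bracket X Y)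
        + (A X * A Y - A Y * A X) := rfl
    rw [e, hA Y, hA X, hA (bracket X Y),
      sasaki_map_aux (D X) (hD_add X) (hD_mul X) (ω1 Y) (ω2 Y) (τ Y) s1 s2 s3 rfl rfl rfl,
      sasaki_map_aux (D Y) (hD_add Y) (hD_mul Y) (ω1 X) (ω2 X) (τ X) s1 s2 s3 rfl rfl rfl,
      b1, b2, b3]
    exact sasaki_aux (ω1 X) (ω2 X) (τ X) (ω1 Y) (ω2 Y) (τ Y)
      (D X (ω1 Y)) (D X (ω2 Y)) (D X (τ Y)) (D Y (ω1 X)) (D Y (ω2 X)) (D Y (τ X))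
      K s1 s2 s3 rfl rfl rfl
  refine ⟨key, ?_⟩
  intro hnz
  constructor
  · intro hΩ p
    obtain ⟨X, Y, hw⟩ := hnz p
    have h := (key X Y).symm.trans (hΩ X Y)
    have hs3 : s3 = !![0, 1/2; -(1/2), 0] := rfl
    rw [hs3] at h
    have h2 : ((((K + 1) * (ω1 X * ω2 Y - ω1 Y * ω2 X)) •
          (!![0, 1/2; -(1/2), 0] : Matrix (Fin 2) (Fin 2) (M → ℝ))) 0 1) p
        = ((0 : Matrix (Fin 2) (Fin 2) (M → ℝ)) 0 1) p := by rw [h]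
    simp only [Matrix.smul_apply, Matrix.zero_apply, smul_eq_mul,
      Matrix.cons_val', Matrix.cons_val_zero, Matrix.cons_val_one, Matrix.head_cons,
      Matrix.empty_val', Matrix.cons_val_fin_one, Matrix.of_apply,
      Pi.mul_apply, Pi.add_apply, Pi.sub_apply, Pi.one_apply, Pi.zero_apply,
      Pi.div_apply, Pi.ofNat_apply] at h2
    have h5 : (K p + 1) * (ω1 X p * ω2 Y p - ω1 Y p * ω2 X p) = 0 := by
      nlinarith [h2]
    have hw' : ω1 X p * ω2 Y p - ω1 Y p * ω2 X p ≠ 0 := by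
      simpa [Pi.sub_apply, Pi.mul_apply] using hw
    rcases mul_eq_zero.mp h5 with h6 | h6
    · linarith
    · exact absurd h6 hw'
  · intro hK X Y
    have hK1 : K + 1 = 0 := by
      funext p
      simp [hK p]
    rw [key X Y, hK1, zero_mul, zero_smul]
end
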